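/- arXiv:2404.11024 — 2 statements merged into one kernel-verified Lean document; each statement's English description precedes it below -/
import Mathlib

section
/- Let L be a symmetric positive definite m×m real matrix and let E be a diagonal m×m matrix with strictly positive diagonal entries E_{ii}. Then for every subset A ⊆ {1,…,m}, P_{ELE}(A) = exp( ∑_{i∈A} 2 log E_{ii} − ( log det(ELE + I) − log det(L + I) ) ) · P_L(A). Hence the subfamily of determinantal point processes obtained by varying the diagonal scaling of a fixed kernel L is an exponential family with sufficient statistics the indicators T_{\{i\}}(A) = 1_{i∈A} and canonical parameters t_i = 2 log E_{ii} (the partially e-flat structure of the quality parameters). -/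
/-- The determinant of the principal submatrix of `M` with rows and columns in `A`
(equal to `1` when `A = ∅`). -/
noncomputable def pminor {m : ℕ} (M : Matrix (Fin m) (Fin m) ℝ) (A : Finset (Fin m)) : ℝ :=
  (M.submatrix (fun i : A => (i : Fin m)) (fun j : A => (j : Fin m))).det

/-- The `L`-ensemble determinantal point process. -/
noncomputable def dppP {m : ℕ} (L : Matrix (Fin m) (Fin m) ℝ) (A : Finset (Fin m)) : ℝ :=
  pminor L A / (L + 1).det

/-!
Conjugating `L` by `E = diag(d)` multiplies every principal minor `det L_A` by `∏_{i ∈ A} d_i²`,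
while the normalising constant changes from `det(L + I)` to `det(ELE + I)`, both positive.
Taking logarithms of these positive factors gives the exponential-family form.
-/

open Matrix Finset

lemma Matrix.PosSemidef.det_add_one_pos {n : Type*} [Fintype n] [DecidableEq n]
    {M : Matrix n n ℝ} (hM : M.PosSemidef) : 0 < (M + 1).det :=
  (PosDef.posSemidef_add hM PosDef.one).det_pos

lemma Matrix.PosSemidef.diagonal_mul_mul_diagonal {n : Type*} [Fintype n] [DecidableEq n]
    {L : Matrix n n ℝ} (hL : L.PosSemidef) (d : n → ℝ) :
    (diagonal d * L * diagonal d).PosSemidef := by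
  simpa using hL.conjTranspose_mul_mul_same (diagonal d)

lemma pminor_diagonal_mul_mul_diagonal {m : ℕ} (M : Matrix (Fin m) (Fin m) ℝ)
    (d e : Fin m → ℝ) (A : Finset (Fin m)) :
    pminor (diagonal d * M * diagonal e) A = (∏ i ∈ A, d i) * (∏ i ∈ A, e i) * pminor M A := by
  have hsub : (diagonal d * M * diagonal e).submatrix (fun i : A => (i : Fin m)) (fun j : A => j)
      = diagonal (fun i : A => d i) * M.submatrix (fun i : A => (i : Fin m)) (fun j : A => j)
        * diagonal (fun i : A => e i) := by
    ext i j
    simp [mul_diagonal, diagonal_mul]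
  rw [pminor, hsub, det_mul, det_mul, det_diagonal, det_diagonal, prod_coe_sort A d,
    prod_coe_sort A e, pminor]
  ring

lemma Real.exp_sum_two_mul_log {ι : Type*} (s : Finset ι) {d : ι → ℝ} (hd : ∀ i ∈ s, 0 < d i) :
    Real.exp (∑ i ∈ s, 2 * Real.log (d i)) = (∏ i ∈ s, d i) ^ 2 := by
  rw [Real.exp_sum, ← prod_pow]
  refine prod_congr rfl fun i hi => ?_
  rw [← Real.exp_log (hd i hi), Real.log_exp, ← Real.exp_nat_mul]
  norm_num

theorem dpp_diagonal_scaling_exponential_family_general (m : ℕ) (L : Matrix (Fin m) (Fin m) ℝ)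
    (hL : L.PosDef)
    (d : Fin m → ℝ) (hd : ∀ i, 0 < d i)
    (E : Matrix (Fin m) (Fin m) ℝ) (hE : E = Matrix.diagonal d)
    (A : Finset (Fin m)) :
    dppP (E * L * E) A
      = Real.exp ((∑ i ∈ A, 2 * Real.log (E i i))
          - (Real.log (E * L * E + 1).det - Real.log (L + 1).det)) * dppP L A := by
  subst hE
  have hdetL := hL.posSemidef.det_add_one_pos
  have hdetM := (hL.posSemidef.diagonal_mul_mul_diagonal d).det_add_one_pos
  simp only [diagonal_apply_eq]
  rw [Real.exp_sub, Real.exp_sub, Real.exp_log hdetL, Real.exp_log hdetM,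
    Real.exp_sum_two_mul_log A fun i _ => hd i, dppP, dppP, pminor_diagonal_mul_mul_diagonal]
  field_simp

theorem dpp_diagonal_scaling_exponential_family (m : ℕ) (L : Matrix (Fin m) (Fin m) ℝ)
    (hsymm : L.IsSymm) (hL : L.PosDef)
    (d : Fin m → ℝ) (hd : ∀ i, 0 < d i)
    (E : Matrix (Fin m) (Fin m) ℝ) (hE : E = Matrix.diagonal d)
    (A : Finset (Fin m)) :
    dppP (E * L * E) A
      = Real.exp ((∑ i ∈ A, 2 * Real.log (E i i))
          - (Real.log (E * L * E + 1).det - Real.log (L + 1).det)) * dppP L A :=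
  dpp_diagonal_scaling_exponential_family_general m L hL d hd E hE A
end

section
/- Let L be a symmetric positive definite m×m real matrix and let Y ∼ P_L. Then the m×m covariance matrix M of the indicator variables (1_{1∈Y},…,1_{m∈Y}) under P_L, i.e., M_{ab} := E_{P_L}[1_{a∈Y}1_{b∈Y}] − E_{P_L}[1_{a∈Y}]E_{P_L}[1_{b∈Y}], is positive definite. (Equivalently, with K := L(L+I)^{-1}, the matrix with diagonal entries K_{aa}(1−K_{aa}) and off-diagonal entries −(K_{ab})² is positive definite; this is the Fisher information of the DPP with respect to the item-wise parameters and underlies the strict convexity of ψ.) -/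
/-!
Under weights `p > 0` summing to one, the covariance matrix of the columns of `X` is
`Bᴴ * diagonal p * B` with `B` the centred `X`, hence positive definite once `B *ᵥ ·` is
injective. For the indicator vectors of all subsets this is automatic: the `∅` and `{a}`
coordinates of `B *ᵥ x` are `-c` and `x a - c` with `c = μ ⬝ᵥ x`, `μ` the mean
row. The DPP weights are positive (principal minors of a positive definite matrix) and sum
to one because `det (1 + L) = ∑ A, det L_A`.
-/

open Matrix Finset

open Polynomial in
theorem Matrix.det_one_add_eq_sum_minors {n R : Type*} [Fintype n] [DecidableEq n] [CommRing R]
    (M : Matrix n n R) :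
    det (1 + M) = ∑ s : Finset n, (M.submatrix (Subtype.val : s → n) Subtype.val).det := by
  let P := det (1 + (X : R[X]) • M.map C)
  have hcoeff : ∀ k, P.coeff k = _ := coeff_det_one_add_X_smul_eq_sum_minors M
  have hdeg : P.natDegree < Fintype.card n + 1 := by
    refine Nat.lt_succ_of_le (natDegree_le_iff_coeff_eq_zero.2 fun k hk => ?_)
    rw [hcoeff, powersetCard_eq_empty.2 (by simpa using hk), sum_empty]
  have heval : P.eval 1 = det (1 + M) := by simp [P, eval_det]
  rw [← heval, eval_eq_sum_range' hdeg, ← powerset_univ, sum_powerset, card_univ]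
  simp only [hcoeff, one_pow, mul_one]

section Covariance

variable {κ ι : Type*} [Fintype κ]

def covarianceMatrix (p : κ → ℝ) (X : Matrix κ ι ℝ) : Matrix ι ι ℝ :=
  of fun a b => ∑ k, p k * X k a * X k b - (∑ k, p k * X k a) * (∑ k, p k * X k b)

theorem covarianceMatrix_eq_conjTranspose_mul_diagonal_mul [DecidableEq κ] {p : κ → ℝ}
    (hp : ∑ k, p k = 1) (X : Matrix κ ι ℝ) :
    covarianceMatrix p X
      = (X - replicateRow κ (p ᵥ* X))ᴴ * diagonal p * (X - replicateRow κ (p ᵥ* X)) := by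
  set μ := p ᵥ* X
  have hμ (a : ι) : ∑ k, p k * X k a = μ a := rfl
  ext a b
  rw [mul_apply]
  simp only [covarianceMatrix, of_apply, mul_diagonal, conjTranspose_apply,
    star_trivial, Matrix.sub_apply, replicateRow_apply]
  have hexpand (k : κ) : (X k a - μ a) * p k * (X k b - μ b)
      = p k * X k a * X k b - μ b * (p k * X k a) - μ a * (p k * X k b) + μ a * μ b * p k := by
    ring
  simp only [hexpand, sum_add_distrib, sum_sub_distrib, ← mul_sum, hμ, hp]
  ring

theorem posDef_covarianceMatrix [Fintype ι] [DecidableEq κ] {p : κ → ℝ} (hpos : ∀ k, 0 < p k)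
    (hp : ∑ k, p k = 1) {X : Matrix κ ι ℝ}
    (hX : Function.Injective (X - replicateRow κ (p ᵥ* X)).mulVec) :
    (covarianceMatrix p X).PosDef := by
  rw [covarianceMatrix_eq_conjTranspose_mul_diagonal_mul hp]
  exact (posDef_diagonal_iff.2 hpos).conjTranspose_mul_mul_same hX

end Covariance

section SubsetIndicator

variable (ι : Type*) [Fintype ι] [DecidableEq ι]

def subsetIndicator : Matrix (Finset ι) ι ℝ :=
  of fun A a => if a ∈ A then 1 else 0

variable {ι}

theorem subsetIndicator_mulVec (x : ι → ℝ) (A : Finset ι) :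
    (subsetIndicator ι *ᵥ x) A = ∑ a ∈ A, x a := by
  simp [subsetIndicator, mulVec, dotProduct, ite_mul, sum_ite_mem]

theorem mulVec_injective_subsetIndicator_sub_replicateRow (μ : ι → ℝ) :
    Function.Injective (subsetIndicator ι - replicateRow (Finset ι) μ).mulVec := by
  refine fun x y hxy => sub_eq_zero.mp (funext fun a => ?_)
  have hker : (subsetIndicator ι - replicateRow (Finset ι) μ) *ᵥ (x - y) = 0 := by
    rw [mulVec_sub, hxy, sub_self]
  have h (A : Finset ι) : ∑ a ∈ A, (x - y) a = μ ⬝ᵥ (x - y) := by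
    simpa [sub_mulVec, subsetIndicator_mulVec, replicateRow_mulVec_eq_const, sub_eq_zero]
      using congrFun hker A
  simpa [← h ∅] using h {a}

end SubsetIndicator

theorem pminor_pos {m : ℕ} {L : Matrix (Fin m) (Fin m) ℝ} (hL : L.PosDef) (A : Finset (Fin m)) :
    0 < pminor L A :=
  (hL.submatrix Subtype.val_injective).det_pos

theorem det_add_one_eq_sum_pminor {m : ℕ} (L : Matrix (Fin m) (Fin m) ℝ) :
    (L + 1).det = ∑ A, pminor L A := by
  rw [add_comm]
  exact det_one_add_eq_sum_minors L

theorem det_add_one_pos {m : ℕ} {L : Matrix (Fin m) (Fin m) ℝ} (hL : L.PosDef) :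
    0 < (L + 1).det := by
  rw [det_add_one_eq_sum_pminor]
  exact sum_pos (fun A _ => pminor_pos hL A) univ_nonempty

theorem dppP_pos {m : ℕ} {L : Matrix (Fin m) (Fin m) ℝ} (hL : L.PosDef) (A : Finset (Fin m)) :
    0 < dppP L A :=
  div_pos (pminor_pos hL A) (det_add_one_pos hL)

theorem sum_dppP_eq_one {m : ℕ} {L : Matrix (Fin m) (Fin m) ℝ} (hL : (L + 1).det ≠ 0) :
    ∑ A, dppP L A = 1 := by
  simp only [dppP]
  rw [← sum_div, ← det_add_one_eq_sum_pminor, div_self hL]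

theorem dpp_indicator_covariance_matrix_posDef_general (m : ℕ) (L : Matrix (Fin m) (Fin m) ℝ)
    (hL : L.PosDef) :
    (Matrix.of fun a b : Fin m =>
      (∑ A : Finset (Fin m),
          dppP L A * (if a ∈ A then 1 else 0) * (if b ∈ A then 1 else 0))
        - (∑ A : Finset (Fin m), dppP L A * (if a ∈ A then 1 else 0)) *
          (∑ A : Finset (Fin m), dppP L A * (if b ∈ A then 1 else 0))).PosDef :=
  posDef_covarianceMatrix (X := subsetIndicator (Fin m)) (dppP_pos hL)
    (sum_dppP_eq_one (det_add_one_pos hL).ne') (mulVec_injective_subsetIndicator_sub_replicateRow _)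

theorem dpp_indicator_covariance_matrix_posDef (m : ℕ) (L : Matrix (Fin m) (Fin m) ℝ)
    (hsymm : L.IsSymm) (hL : L.PosDef) :
    (Matrix.of fun a b : Fin m =>
      (∑ A : Finset (Fin m),
          dppP L A * (if a ∈ A then 1 else 0) * (if b ∈ A then 1 else 0))
        - (∑ A : Finset (Fin m), dppP L A * (if a ∈ A then 1 else 0)) *
          (∑ A : Finset (Fin m), dppP L A * (if b ∈ A then 1 else 0))).PosDef :=
  dpp_indicator_covariance_matrix_posDef_general m L hL
end
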